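/- Over a three-letter alphabet, the only square-free words of length 7 whose every one-letter extension contains a square, and which produce squares of lengths 2, 4, and 8 upon appending the three letters, are the words obtained from abacaba by permuting the letters; in particular, abacaba is a stop-word: appending any of a, b, c to abacaba creates a square. -/
import Mathlib


/-- A word (list) is square-free if it contains no nonempty factor of the form `u ++ u`. -/
def SqFree {α : Type*} (l : List α) : Prop :=
  ∀ u : List α, u ≠ [] → ¬ (u ++ u) <:+: l

/-- The word `abacaba` over the three-letter alphabet `Fin 3` (with `a = 0`, `b = 1`, `c = 2`). -/
def abacaba : List (Fin 3) := [0, 1, 0, 2, 0, 1, 0]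

/-- Bounded, decidable reformulation of square-freeness. -/
def NoSq (l : List (Fin 3)) : Prop :=
  ∀ i < l.length, ∀ k ≤ l.length, 0 < k → i + 2*k ≤ l.length →
    (l.drop i).take k ≠ (l.drop (i+k)).take k

lemma sqfree_iff (l : List (Fin 3)) : SqFree l ↔ NoSq l := by
  constructor
  · intro h i hi k hk hk0 hle heq
    apply h ((l.drop i).take k)
    · have hlen : ((l.drop i).take k).length = k := by
        rw [List.length_take, List.length_drop]; omega
      intro hnil; rw [hnil] at hlen; simp at hlen; omega
    · have h2 : (l.drop i).take k ++ (l.drop i).take k = (l.drop i).take (2*k) := by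
        rw [two_mul, List.take_add, List.drop_drop, ← heq]
      rw [h2]
      exact ((List.take_prefix _ _).isInfix).trans ((List.drop_suffix _ _).isInfix)
  · rintro h u hu ⟨s, t, hst⟩
    have hL := congrArg List.length hst
    simp at hL
    have hu0 : u.length ≠ 0 := by simpa using hu
    apply h s.length (by omega) u.length (by omega) (by omega) (by omega)
    have hd : l.drop s.length = u ++ u ++ t := by rw [← hst]; simp
    have hd2 : l.drop (s.length + u.length) = u ++ t := by
      rw [← List.drop_drop, hd, List.append_assoc, List.drop_left]
    rw [hd, hd2, List.append_assoc, List.take_left', List.take_left']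
    · rfl
    · rfl

/-- Decidable reformulation of "ends with a square of half-length `n`". -/
def TermSq (n : ℕ) (v : List (Fin 3)) : Prop :=
  2*n ≤ v.length ∧ (v.drop (v.length - 2*n)).take n = (v.drop (v.length - 2*n)).drop n

lemma termsq_iff (n : ℕ) (v : List (Fin 3)) :
    (∃ u : List (Fin 3), u.length = n ∧ (u ++ u) <:+ v) ↔ TermSq n v := by
  constructor
  · rintro ⟨u, hlen, s, hs⟩
    have hL := congrArg List.length hs
    simp [hlen] at hL
    have h1 : v.length - 2*n = s.length := by omega
    have hd : v.drop (v.length - 2*n) = u ++ u := by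
      rw [h1, ← hs, List.drop_left]
    constructor
    · omega
    · rw [hd, List.take_left' hlen, List.drop_left' hlen]
  · rintro ⟨hle, heq⟩
    set s := v.drop (v.length - 2*n) with hsdef
    have hslen : s.length = 2*n := by
      rw [hsdef, List.length_drop]; omega
    refine ⟨s.take n, ?_, ?_⟩
    · rw [List.length_take]; omega
    · have : s.take n ++ s.take n = s := by
        conv_rhs => rw [← List.take_append_drop n s]
        rw [← heq]
      rw [this]
      exact List.drop_suffix _ _

instance (l : List (Fin 3)) : Decidable (NoSq l) := by unfold NoSq; infer_instance
instance (n : ℕ) (v : List (Fin 3)) : Decidable (TermSq n v) := by unfold TermSq; infer_instance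

set_option maxRecDepth 100000 in
set_option maxHeartbeats 4000000 in
lemma key : ∀ a b c d e f g : Fin 3,
    NoSq [a,b,c,d,e,f,g] →
    (∀ ℓ : Fin 3, ¬ NoSq ([a,b,c,d,e,f,g] ++ [ℓ])) →
    (∃ e' : Fin 3 ≃ Fin 3, ∀ ℓ : Fin 3, TermSq (2^(e' ℓ : ℕ)) ([a,b,c,d,e,f,g] ++ [ℓ])) →
    ∃ π : Equiv.Perm (Fin 3), [a,b,c,d,e,f,g] = abacaba.map π := by
  decide

/-- `abacaba` is a square-free stop-word (appending any letter creates a square), and the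
only square-free words of length 7 that are stop-words producing terminal squares `uu` of
half-lengths 1, 2 and 4 (one for each appended letter) are the images of `abacaba` under
permutations of the letters. -/
theorem stop_word_abacaba :
    (SqFree abacaba ∧ ∀ ℓ : Fin 3, ¬ SqFree (abacaba ++ [ℓ])) ∧
    (∀ w : List (Fin 3), w.length = 7 → SqFree w →
      (∀ ℓ : Fin 3, ¬ SqFree (w ++ [ℓ])) →
      (∃ e : Fin 3 ≃ Fin 3, ∀ ℓ : Fin 3, ∃ u : List (Fin 3),
        u.length = 2 ^ (e ℓ : ℕ) ∧ (u ++ u) <:+ (w ++ [ℓ])) →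
      ∃ π : Equiv.Perm (Fin 3), w = abacaba.map π) := by
  constructor
  · constructor
    · exact (sqfree_iff _).mpr (by decide)
    · intro ℓ h
      have hno : ∀ ℓ : Fin 3, ¬ NoSq (abacaba ++ [ℓ]) := by decide
      exact hno ℓ ((sqfree_iff _).mp h)
  · intro w hlen hsf hstop hex
    obtain ⟨a, b, c, d, e0, f, g, rfl⟩ :
        ∃ a b c d e0 f g, w = [a, b, c, d, e0, f, g] := by
      rcases w with _|⟨a,_|⟨b,_|⟨c,_|⟨d,_|⟨e0,_|⟨f,_|⟨g,_|⟨h,w⟩⟩⟩⟩⟩⟩⟩⟩ <;>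
        first
          | exact ⟨_, _, _, _, _, _, _, rfl⟩
          | (simp at hlen)
    apply key a b c d e0 f g
    · exact (sqfree_iff _).mp hsf
    · exact fun ℓ h => hstop ℓ ((sqfree_iff _).mpr h)
    · obtain ⟨e', he⟩ := hex
      exact ⟨e', fun ℓ => (termsq_iff _ _).mp (he ℓ)⟩
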